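/- Let r be a natural number, 1 < p < ∞, q = p/(p−1), β ≥ 0, and let ω be a function of modulus-of-continuity type. If {∫_0^{π/(r(n+1))} (ω(t)/(t·sin^β(rt/2)))^q dt}^{1/q} = O((n+1)^{β+1/p} ω(π/(n+1))), then for every m ∈ {0,…,⌊r/2⌋}, {∫_{2mπ/r}^{2mπ/r + π/(r(n+1))} (ω(t)/(t·|sin(rt/2)|^β))^q dt}^{1/q} = O((n+1)^{β+1/p} ω(π/(n+1))). -/

import Mathlib

open Real

noncomputable section

/-- `ω` is a function of modulus-of-continuity type on `[0, 2π]`. -/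
def ModulusType (ω : ℝ → ℝ) : Prop :=
  ContinuousOn ω (Set.Icc 0 (2 * π)) ∧ MonotoneOn ω (Set.Icc 0 (2 * π)) ∧ ω 0 = 0 ∧
    ∀ δ₁ δ₂ : ℝ, 0 ≤ δ₁ → δ₁ ≤ δ₂ → δ₁ + δ₂ ≤ 2 * π → ω (δ₁ + δ₂) ≤ ω δ₁ + ω δ₂

/-!
For `m = 0` the claim is the hypothesis, because `sin (r t / 2) ≥ 0` on `[0, π / r]`.
For `m ≥ 1` write `t = 2mπ/r + s`: then `|sin (r t / 2)| = |sin (r s / 2)|`, the factor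
`ω t / t` lies between `ω(2mπ/r) / (2π)` and `ω(2π) / (2mπ/r)`, and Jordan's inequality `2x/π ≤ sin x ≤ x` makes the
integrand comparable to `s ^ (-β q)`. If `β q < 1`, integrating over `[0, π / (r (n+1))]` bounds
the `L^q` norm by `ω(2π) · O((n+1) ^ (β + 1/p - 1))`, and subadditivity gives
`ω(2π) ≤ 2 (n+1) ω(π/(n+1))`. If `β q ≥ 1` the integral diverges (unless `ω` vanishes there),
so its Bochner value is `0` and the bound holds trivially.
-/

open MeasureTheory Set

namespace ModulusType

variable {ω : ℝ → ℝ} {x y a δ : ℝ}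

theorem mono (hω : ModulusType ω) (hx : 0 ≤ x) (hxy : x ≤ y) (hy : y ≤ 2 * π) : ω x ≤ ω y :=
  hω.2.1 ⟨hx, hxy.trans hy⟩ ⟨hx.trans hxy, hy⟩ hxy

theorem nonneg (hω : ModulusType ω) (hx : 0 ≤ x) (hx' : x ≤ 2 * π) : 0 ≤ ω x :=
  hω.2.2.1 ▸ hω.mono le_rfl hx hx'

theorem add_le (hω : ModulusType ω) (hx : 0 ≤ x) (hy : 0 ≤ y) (hxy : x + y ≤ 2 * π) :
    ω (x + y) ≤ ω x + ω y := by
  rcases le_total x y with h | h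
  · exact hω.2.2.2 x y hx h hxy
  · rw [add_comm x, add_comm (ω x)]
    exact hω.2.2.2 y x hy h (by linarith)

theorem nat_mul_le (hω : ModulusType ω) (hδ : 0 ≤ δ) :
    ∀ k : ℕ, k * δ ≤ 2 * π → ω (k * δ) ≤ k * ω δ
  | 0, _ => by simp [hω.2.2.1]
  | k + 1, hk => by
    push_cast at hk ⊢
    calc ω ((k + 1) * δ) = ω (k * δ + δ) := by ring_nf
      _ ≤ ω (k * δ) + ω δ := hω.add_le (by positivity) hδ (by linarith)
      _ ≤ k * ω δ + ω δ := by gcongr; exact hω.nat_mul_le hδ k (by linarith)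
      _ = (k + 1) * ω δ := by ring

theorem le_two_mul_of_le_two_mul (hω : ModulusType ω) (hx : 0 ≤ x) (hxa : x ≤ 2 * a)
    (ha : a ≤ π) : ω x ≤ 2 * ω a := by
  have h := hω.nat_mul_le (δ := x / 2) (by positivity) 2 (by push_cast; linarith)
  push_cast at h
  calc ω x = ω (2 * (x / 2)) := by ring_nf
    _ ≤ 2 * ω (x / 2) := h
    _ ≤ 2 * ω a := by gcongr; exact hω.mono (by positivity) (by linarith) (by linarith)

theorem apply_two_pi_le (hω : ModulusType ω) (n : ℕ) :
    ω (2 * π) ≤ 2 * (n + 1) * ω (π / (n + 1)) := by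
  have h := hω.nat_mul_le (δ := π / (n + 1)) (by positivity) (2 * (n + 1))
    (by push_cast; field_simp; rfl)
  push_cast at h
  convert h using 2
  field_simp

end ModulusType

theorem integral_le_of_le_mul_rpow {g : ℝ → ℝ} {C γ h : ℝ} (hγ : γ < 1) (hh : 0 ≤ h)
    (hC : 0 ≤ C) (hg : ∀ s ∈ Ioo 0 h, g s ≤ C * s ^ (-γ)) :
    ∫ s in 0..h, g s ≤ C * (h ^ (1 - γ) / (1 - γ)) := by
  have hγ' : 0 < 1 - γ := by linarith
  by_cases hi : IntervalIntegrable g volume 0 h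
  · calc ∫ s in 0..h, g s ≤ ∫ s in 0..h, C * s ^ (-γ) :=
          intervalIntegral.integral_mono_on_of_le_Ioo hh hi
            ((intervalIntegral.intervalIntegrable_rpow' (by linarith)).const_mul C) hg
      _ = C * (h ^ (1 - γ) / (1 - γ)) := by
          rw [intervalIntegral.integral_const_mul, integral_rpow (Or.inl (by linarith)),
            zero_rpow (by linarith), neg_add_eq_sub, sub_zero]
  · rw [intervalIntegral.integral_undef hi]
    positivity

theorem not_intervalIntegrable_of_mul_rpow_le {g : ℝ → ℝ} {c γ h : ℝ} (hγ : 1 ≤ γ)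
    (hh : 0 < h) (hc : 0 < c) (hg : ∀ s ∈ Ioo 0 h, c * s ^ (-γ) ≤ g s) :
    ¬IntervalIntegrable g volume 0 h := by
  intro hi
  have hbound : IntegrableOn (fun s ↦ c * s ^ (-γ)) (Ioo 0 h) := by
    refine ((intervalIntegrable_iff_integrableOn_Ioo_of_le hh.le).1 hi).mono'
      (by fun_prop : Measurable fun s : ℝ ↦ c * s ^ (-γ)).aestronglyMeasurable
      ((ae_restrict_iff' measurableSet_Ioo).2 (.of_forall fun s hs ↦ ?_))
    rw [Real.norm_of_nonneg (by have := hs.1; positivity)]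
    exact hg s hs
  rw [IntegrableOn, integrable_const_mul_iff (isUnit_iff_ne_zero.2 hc.ne'),
    ← IntegrableOn, intervalIntegral.integrableOn_Ioo_rpow_iff hh] at hbound
  linarith

theorem rpow_div_mul_mul_rpow {A b c s : ℝ} (hA : 0 ≤ A) (hb : 0 < b) (hc : 0 < c)
    (hs : 0 < s) (β q : ℝ) :
    (A / (b * (c * s) ^ β)) ^ q = (A / b / c ^ β) ^ q * s ^ (-(β * q)) := by
  rw [rpow_neg hs.le, rpow_mul hs.le, ← inv_rpow (rpow_nonneg hs.le _),
    ← mul_rpow (by positivity) (by positivity), mul_rpow hc.le hs.le]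
  congr 1
  field_simp

def singularIntegrand (ω : ℝ → ℝ) (r : ℕ) (β q t : ℝ) : ℝ :=
  (ω t / (t * |sin (r * t / 2)| ^ β)) ^ q

section Shift

variable {ω : ℝ → ℝ} {r m : ℕ} {β q s : ℝ}

theorem two_mul_pi_div_mem_Icc (hm : 1 ≤ m) (hmr : 2 * m ≤ r) :
    2 * m * π / r ∈ Icc (π / r) π := by
  have hr : (0 : ℝ) < r := by exact_mod_cast (by omega : 0 < r)
  have hm' : (1 : ℝ) ≤ m := by exact_mod_cast hm
  have hmr' : 2 * (m : ℝ) ≤ r := by exact_mod_cast hmr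
  constructor
  · gcongr
    nlinarith [pi_pos]
  · rw [div_le_iff₀ hr]
    nlinarith [pi_pos]

theorem pi_div_mul_succ_mem_Ioc (hr : r ≠ 0) (n : ℕ) :
    π / (r * ((n : ℝ) + 1)) ∈ Ioc 0 (π / r) := by
  have hr' : (0 : ℝ) < r := by positivity
  exact ⟨by positivity, div_le_div_of_nonneg_left pi_pos.le hr'
    (le_mul_of_one_le_right hr'.le (by linarith [n.cast_nonneg (α := ℝ)]))⟩

theorem nat_mul_pi_div_mul_succ_le (r n : ℕ) : r * (π / (r * ((n : ℝ) + 1))) ≤ π := by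
  rcases eq_or_ne r 0 with rfl | hr
  · simp [pi_pos.le]
  · have : (r : ℝ) * (π / (r * ((n : ℝ) + 1))) = π / (n + 1) := by field_simp
    rw [this]
    exact div_le_self pi_pos.le (by linarith [n.cast_nonneg (α := ℝ)])

theorem abs_sin_two_mul_pi_div_add (hr : r ≠ 0) (m : ℕ) (s : ℝ) :
    |sin (r * (2 * m * π / r + s) / 2)| = |sin (r * s / 2)| := by
  have : (r : ℝ) * (2 * m * π / r + s) / 2 = r * s / 2 + m * π := by
    field_simp
    ring
  rw [this, sin_add_nat_mul_pi, abs_mul, abs_pow, abs_neg, abs_one, one_pow, one_mul]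

theorem sin_pos_of_le_pi_div (hr : r ≠ 0) (hs0 : 0 < s) (hs : s ≤ π / r) :
    0 < sin (r * s / 2) := by
  have hr' : (0 : ℝ) < r := by positivity
  refine sin_pos_of_pos_of_lt_pi (by positivity) ?_
  rw [le_div_iff₀ hr'] at hs
  linarith [pi_pos]

theorem singularIntegrand_add_le (hω : ModulusType ω) (hβ : 0 ≤ β) (hq : 0 ≤ q) (hm : 1 ≤ m)
    (hmr : 2 * m ≤ r) (hs0 : 0 < s) (hs : s ≤ π / r) :
    singularIntegrand ω r β q (2 * m * π / r + s) ≤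
      (ω (2 * π) / (2 * m * π / r) / (r / π) ^ β) ^ q * s ^ (-(β * q)) := by
  obtain ⟨ha, ha'⟩ := two_mul_pi_div_mem_Icc hm hmr
  have hr : r ≠ 0 := by omega
  have hr' : (0 : ℝ) < r := by positivity
  have hπr : π / r ≤ π := div_le_self pi_pos.le (by exact_mod_cast (by omega : 1 ≤ r))
  have hsin := sin_pos_of_le_pi_div hr hs0 hs
  have hjordan : r / π * s ≤ |sin (r * s / 2)| := by
    rw [abs_of_pos hsin]
    calc r / π * s = 2 / π * (r * s / 2) := by ring
      _ ≤ sin (r * s / 2) := mul_le_sin (by positivity) (by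
          rw [le_div_iff₀ hr'] at hs; linarith)
  rw [singularIntegrand, abs_sin_two_mul_pi_div_add hr, ← rpow_div_mul_mul_rpow
    (hω.nonneg (by positivity) le_rfl) (by positivity) (by positivity) hs0]
  have hωt := hω.nonneg (x := 2 * m * π / r + s) (by positivity) (by linarith)
  gcongr
  · exact hω.nonneg (by positivity) le_rfl
  · exact hω.mono (by positivity) (by linarith) le_rfl
  · linarith

theorem le_singularIntegrand_add (hω : ModulusType ω) (hβ : 0 ≤ β) (hq : 0 ≤ q) (hm : 1 ≤ m)
    (hmr : 2 * m ≤ r) (hs0 : 0 < s) (hs : s ≤ π / r) :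
    (ω (2 * m * π / r) / (2 * π) / (r / 2) ^ β) ^ q * s ^ (-(β * q)) ≤
      singularIntegrand ω r β q (2 * m * π / r + s) := by
  obtain ⟨ha, ha'⟩ := two_mul_pi_div_mem_Icc hm hmr
  have hr : r ≠ 0 := by omega
  have hπr : π / r ≤ π := div_le_self pi_pos.le (by exact_mod_cast (by omega : 1 ≤ r))
  have hsin := sin_pos_of_le_pi_div hr hs0 hs
  have hsin_le : |sin (r * s / 2)| ≤ r / 2 * s := by
    rw [abs_of_pos hsin]
    linarith [sin_le (by positivity : 0 ≤ (r : ℝ) * s / 2)]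
  rw [singularIntegrand, abs_sin_two_mul_pi_div_add hr, ← rpow_div_mul_mul_rpow
    (hω.nonneg (by positivity) (by linarith)) (by positivity) (by positivity) hs0]
  have has : 2 * m * π / r + s ≤ 2 * π := by linarith
  have hωa := hω.nonneg (x := 2 * m * π / r) (by positivity) (by linarith)
  gcongr
  · exact hω.nonneg (by positivity) has
  · exact hω.mono (by positivity) (by linarith) has

end Shift

section Integrals

variable {ω : ℝ → ℝ} {r m : ℕ} {p β q h : ℝ}

theorem singularIntegrand_nonneg (hω : ModulusType ω) {t : ℝ} (ht0 : 0 ≤ t) (ht : t ≤ 2 * π) :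
    0 ≤ singularIntegrand ω r β q t :=
  rpow_nonneg (div_nonneg (hω.nonneg ht0 ht) (by positivity)) q

theorem integral_singularIntegrand_eq_integral_sin {b : ℝ} (hb : 0 ≤ b) (hrb : r * b ≤ 2 * π) :
    ∫ t in 0..b, singularIntegrand ω r β q t =
      ∫ t in 0..b, (ω t / (t * sin (r * t / 2) ^ β)) ^ q := by
  refine intervalIntegral.integral_congr fun t ht ↦ ?_
  rw [uIcc_of_le hb] at ht
  have hrt : r * t ≤ r * b := by gcongr; exact ht.2
  rw [singularIntegrand,
    abs_of_nonneg (sin_nonneg_of_nonneg_of_le_pi (by positivity [ht.1]) (by linarith))]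

theorem integral_singularIntegrand_add_le (hω : ModulusType ω) (hβ : 0 ≤ β) (hq : 0 ≤ q)
    (hβq : β * q < 1) (hm : 1 ≤ m) (hmr : 2 * m ≤ r) (hh0 : 0 ≤ h) (hh : h ≤ π / r) :
    ∫ t in 2 * m * π / r..2 * m * π / r + h, singularIntegrand ω r β q t ≤
      (ω (2 * π) / (2 * m * π / r) / (r / π) ^ β) ^ q * (h ^ (1 - β * q) / (1 - β * q)) := by
  have hC : 0 ≤ (ω (2 * π) / (2 * m * π / r) / (r / π) ^ β) ^ q := by
    have := hω.nonneg (x := 2 * π) (by positivity) le_rfl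
    positivity
  have := integral_le_of_le_mul_rpow (g := fun s ↦ singularIntegrand ω r β q (2 * m * π / r + s))
    hβq hh0 hC fun s hs ↦ singularIntegrand_add_le hω hβ hq hm hmr hs.1 (hs.2.le.trans hh)
  rwa [intervalIntegral.integral_comp_add_left, add_zero] at this

theorem integral_singularIntegrand_add_eq_zero (hω : ModulusType ω) (hβ : 0 ≤ β) (hq : 0 < q)
    (hβq : 1 ≤ β * q) (hm : 1 ≤ m) (hmr : 2 * m ≤ r) (hh0 : 0 < h) (hh : h ≤ π / r) :
    ∫ t in 2 * m * π / r..2 * m * π / r + h, singularIntegrand ω r β q t = 0 := by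
  obtain ⟨ha, ha'⟩ := two_mul_pi_div_mem_Icc hm hmr
  have hr : (0 : ℝ) < r := by exact_mod_cast (by omega : 0 < r)
  rcases (hω.nonneg (x := 2 * m * π / r) (by positivity) (by linarith)).eq_or_lt with hωa | hωa
  · refine (intervalIntegral.integral_congr fun t ht ↦ ?_).trans intervalIntegral.integral_zero
    rw [uIcc_of_le (by linarith)] at ht
    have hωt : ω t = 0 := le_antisymm
      (by simpa [← hωa] using
        hω.le_two_mul_of_le_two_mul (by linarith [ht.1]) (by linarith [ht.2]) ha')
      (hω.nonneg (by linarith [ht.1]) (by linarith [ht.2]))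
    simp [singularIntegrand, hωt, zero_rpow hq.ne']
  · refine intervalIntegral.integral_undef fun hi ↦ not_intervalIntegrable_of_mul_rpow_le hβq hh0
      (by positivity) (fun s hs ↦ le_singularIntegrand_add hω hβ hq.le hm hmr hs.1
        (hs.2.le.trans hh)) ?_
    simpa using hi.comp_add_left (2 * m * π / r)

theorem exists_integral_singularIntegrand_add_rpow_le (hω : ModulusType ω) (hβ : 0 ≤ β)
    (hpq : p.HolderConjugate q) (hβq : β * q < 1) (hm : 1 ≤ m) (hmr : 2 * m ≤ r) :
    ∃ C : ℝ, ∀ n : ℕ,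
      (∫ t in 2 * m * π / r..2 * m * π / r + π / (r * ((n : ℝ) + 1)),
          singularIntegrand ω r β q t) ^ (1 / q)
        ≤ C * (((n : ℝ) + 1) ^ (β + 1 / p) * ω (π / ((n : ℝ) + 1))) := by
  obtain ⟨ha, ha'⟩ := two_mul_pi_div_mem_Icc hm hmr
  have hr : (0 : ℝ) < r := by exact_mod_cast (by omega : 0 < r)
  have hπr : π / r ≤ π := div_le_self pi_pos.le (by exact_mod_cast (by omega : 1 ≤ r))
  have hq := hpq.symm.pos
  have hβq' : 0 < 1 - β * q := by linarith
  set a := 2 * m * π / r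
  set A := ω (2 * π) / a / (r / π) ^ β
  set D := (π / r) ^ (1 - β * q) / (1 - β * q)
  refine ⟨2 / a / (r / π) ^ β * D ^ (1 / q), fun n ↦ ?_⟩
  have hn : (0 : ℝ) < n + 1 := by positivity
  have hA : 0 ≤ A := by
    have := hω.nonneg (x := 2 * π) (by positivity) le_rfl
    positivity
  have hh : π / (r * ((n : ℝ) + 1)) = π / r * ((n : ℝ) + 1)⁻¹ := by field_simp
  have hhr := (pi_div_mul_succ_mem_Ioc (by omega : r ≠ 0) n).2
  set E := ((n : ℝ) + 1) ^ (β + 1 / p - 1)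
  have hexp : (β + 1 / p - 1) * q = -(1 - β * q) := by
    rw [one_div, add_sub_assoc, hpq.inv_sub_one]
    field_simp
    ring
  have hX : (π / (r * ((n : ℝ) + 1))) ^ (1 - β * q) / (1 - β * q) = D * E ^ q := by
    rw [← rpow_mul hn.le, hexp, rpow_neg hn.le, hh, mul_rpow (by positivity) (by positivity),
      inv_rpow hn.le]
    ring
  calc (∫ t in a..a + π / (r * ((n : ℝ) + 1)), singularIntegrand ω r β q t) ^ (1 / q)
      ≤ (A ^ q * (D * E ^ q)) ^ (1 / q) := by
        rw [← hX]
        refine rpow_le_rpow (intervalIntegral.integral_nonneg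
          (le_add_of_nonneg_right (by positivity)) fun t ht ↦ singularIntegrand_nonneg hω
            (by linarith [ht.1, div_pos pi_pos hr]) (by linarith [ht.2]))
          (integral_singularIntegrand_add_le hω hβ hq.le hβq hm hmr (by positivity) hhr)
          (by positivity)
    _ = ((A * E) ^ q * D) ^ (1 / q) := by
        rw [mul_rpow hA (by positivity)]
        congr 1
        ring
    _ = A * D ^ (1 / q) * E := by
        rw [mul_rpow (by positivity) (by positivity), one_div,
          rpow_rpow_inv (by positivity) hq.ne']
        ring
    _ ≤ 2 * ((n : ℝ) + 1) * ω (π / ((n : ℝ) + 1)) / a / (r / π) ^ β * D ^ (1 / q) * E := by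
        gcongr ?_ * _ * _
        exact div_le_div_of_nonneg_right (div_le_div_of_nonneg_right (hω.apply_two_pi_le n)
          (by positivity)) (by positivity)
    _ = 2 / a / (r / π) ^ β * D ^ (1 / q) *
          (((n : ℝ) + 1) ^ (β + 1 / p) * ω (π / ((n : ℝ) + 1))) := by
        rw [show β + 1 / p = β + 1 / p - 1 + 1 by ring, rpow_add_one hn.ne']
        ring

end Integrals

theorem lemma_seven_general (r : ℕ) (p q β : ℝ) (hp : 1 < p) (hq : q = p / (p - 1))
    (hβ : 0 ≤ β) (ω : ℝ → ℝ) (hω : ModulusType ω)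
    (h : ∃ C : ℝ, ∀ n : ℕ,
      (∫ t in (0:ℝ)..(π / (r * ((n : ℝ) + 1))),
          (ω t / (t * Real.sin (r * t / 2) ^ β)) ^ q) ^ (1 / q)
        ≤ C * (((n : ℝ) + 1) ^ (β + 1 / p) * ω (π / ((n : ℝ) + 1)))) :
    ∀ m : ℕ, m ≤ r / 2 →
      ∃ C : ℝ, ∀ n : ℕ,
        (∫ t in (2 * m * π / r)..(2 * m * π / r + π / (r * ((n : ℝ) + 1))),
            (ω t / (t * |Real.sin (r * t / 2)| ^ β)) ^ q) ^ (1 / q)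
          ≤ C * (((n : ℝ) + 1) ^ (β + 1 / p) * ω (π / ((n : ℝ) + 1))) := by
  intro m hm
  have hpq : p.HolderConjugate q := (holderConjugate_iff_eq_conjExponent hp).2 hq
  rcases Nat.eq_zero_or_pos m with rfl | hm0
  · obtain ⟨C, hC⟩ := h
    refine ⟨C, fun n ↦ ?_⟩
    have := integral_singularIntegrand_eq_integral_sin (ω := ω) (β := β) (q := q)
      (by positivity) ((nat_mul_pi_div_mul_succ_le r n).trans (by linarith [pi_pos]))
    simp only [singularIntegrand, Nat.cast_zero, mul_zero, zero_mul, zero_div, zero_add] at this ⊢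
    exact this ▸ hC n
  have hmr : 2 * m ≤ r := by omega
  rcases lt_or_ge (β * q) 1 with hβq | hβq
  · exact exists_integral_singularIntegrand_add_rpow_le hω hβ hpq hβq hm0 hmr
  · refine ⟨0, fun n ↦ ?_⟩
    obtain ⟨hh0, hh⟩ := pi_div_mul_succ_mem_Ioc (by omega : r ≠ 0) n
    have := integral_singularIntegrand_add_eq_zero hω hβ hpq.symm.pos hβq hm0 hmr hh0 hh
    simp only [singularIntegrand] at this
    rw [this, zero_rpow (one_div_pos.2 hpq.symm.pos).ne', zero_mul]

/-- **Lemma 7.** Condition (2.81) transfers to the right neighbourhoods of the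
points `2mπ/r`. -/
theorem lemma_seven (r : ℕ) (hr : 1 ≤ r) (p q β : ℝ) (hp : 1 < p) (hq : q = p / (p - 1))
    (hβ : 0 ≤ β) (ω : ℝ → ℝ) (hω : ModulusType ω)
    (h : ∃ C : ℝ, ∀ n : ℕ,
      (∫ t in (0:ℝ)..(π / (r * ((n : ℝ) + 1))),
          (ω t / (t * Real.sin (r * t / 2) ^ β)) ^ q) ^ (1 / q)
        ≤ C * (((n : ℝ) + 1) ^ (β + 1 / p) * ω (π / ((n : ℝ) + 1)))) :
    ∀ m : ℕ, m ≤ r / 2 →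
      ∃ C : ℝ, ∀ n : ℕ,
        (∫ t in (2 * m * π / r)..(2 * m * π / r + π / (r * ((n : ℝ) + 1))),
            (ω t / (t * |Real.sin (r * t / 2)| ^ β)) ^ q) ^ (1 / q)
          ≤ C * (((n : ℝ) + 1) ^ (β + 1 / p) * ω (π / ((n : ℝ) + 1))) :=
  lemma_seven_general r p q β hp hq hβ ω hω h
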